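/- Under the hypotheses of the bounded-solution criterion (∫_ℝ (1/Δ(s)) f(γ(s)) ∧ F(s) ds = 0 and the dichotomy estimates), the function z(t) with components z_j(t) = γ_j'(t)·(x₂ − ∫₀ᵗ (ζ(s)/Δ(s)) ∧ F(s) ds) + ζ_j(t)·∫_{−∞}^{t} (γ'(s)/Δ(s)) ∧ F(s) ds, j = 1,2, is a bounded solution of ż − A(t)z = F(t). -/

import Mathlib

/-!
Write `a ∧ b = a₀b₁ - a₁b₀`. Since `γ'` and `ζ` both solve `ẋ = A(t)x` and `Δ = γ' ∧ ζ` never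
vanishes, Cramer's rule `F = -(ζ ∧ F / Δ) γ' + (γ' ∧ F / Δ) ζ` makes the variation-of-constants
formula a solution of `ż = A(t)z + F`. For boundedness, the dichotomy says
`‖γ'(t)‖ ‖ζ(s)‖ ≤ k e^{-ω|t-s|}` whenever `s` lies between `0` and `t`; this bounds every integrand
by a multiple of `e^{-ω|t-s|}`, whose integral over `ℝ` is `2/ω`. For `t ≥ 0` the criterion
`∫_ℝ γ' ∧ F / Δ = 0` replaces `∫_{-∞}^t` by `-∫_t^∞`, where the estimate applies.
-/

open MeasureTheory intervalIntegral Set Real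

def wedge (a b : Fin 2 → ℝ) : ℝ := a 0 * b 1 - a 1 * b 0

lemma Continuous.wedge {X : Type*} [TopologicalSpace X] {a b : X → Fin 2 → ℝ}
    (ha : Continuous a) (hb : Continuous b) : Continuous fun x => wedge (a x) (b x) := by
  unfold _root_.wedge
  fun_prop

lemma abs_wedge_le (a b : Fin 2 → ℝ) : |wedge a b| ≤ 2 * ‖a‖ * ‖b‖ := by
  have h : ∀ i j, |a i * b j| ≤ ‖a‖ * ‖b‖ := fun i j => by
    rw [abs_mul]
    exact mul_le_mul (norm_le_pi_norm a i) (norm_le_pi_norm b j) (abs_nonneg _) (norm_nonneg _)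
  calc |wedge a b| ≤ |a 0 * b 1| + |a 1 * b 0| := abs_sub _ _
    _ ≤ 2 * ‖a‖ * ‖b‖ := by linarith [h 0 1, h 1 0]

lemma wedge_smul_add_smul_eq {a b : Fin 2 → ℝ} (h : wedge a b ≠ 0) (c : Fin 2 → ℝ) :
    (-(wedge b c / wedge a b)) • a + (wedge a c / wedge a b) • b = c := by
  ext i
  simp only [Pi.add_apply, Pi.smul_apply, smul_eq_mul]
  field_simp
  simp only [wedge]
  fin_cases i <;> simp <;> ring

lemma norm_wedge_div_smul_le {a c w : Fin 2 → ℝ} {d m M K : ℝ} (hm : 0 < m) (hd : m ≤ |d|)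
    (hM : 0 ≤ M) (hc : ‖c‖ ≤ M) (haw : ‖a‖ * ‖w‖ ≤ K) :
    ‖(wedge a c / d) • w‖ ≤ 2 * M / m * K := by
  rw [norm_smul, Real.norm_eq_abs, abs_div]
  calc |wedge a c| / |d| * ‖w‖ ≤ 2 * ‖a‖ * ‖c‖ / m * ‖w‖ := by
        gcongr
        exact abs_wedge_le a c
    _ = 2 * ‖c‖ / m * (‖a‖ * ‖w‖) := by ring
    _ ≤ 2 * M / m * K := by gcongr

lemma norm_mul_norm_le_of_forall_abs_mul_le {ι κ : Type*} [Fintype ι] [Fintype κ]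
    {x : ι → ℝ} {y : κ → ℝ} {B : ℝ} (hB : 0 ≤ B)
    (h : ∀ i j, |x i * y j| ≤ B) : ‖x‖ * ‖y‖ ≤ B := by
  have hrow : ∀ i, |x i| * ‖y‖ ≤ B := fun i => by
    rw [← Real.norm_eq_abs, ← norm_smul, pi_norm_le_iff_of_nonneg hB]
    exact h i
  have hswap : ‖x‖ * ‖y‖ = ‖‖y‖ • x‖ := by rw [norm_smul, norm_norm, mul_comm]
  rw [hswap, pi_norm_le_iff_of_nonneg hB]
  intro i
  rw [Pi.smul_apply, norm_smul, norm_norm, mul_comm, Real.norm_eq_abs]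
  exact hrow i

lemma integral_exp_neg_mul_abs {ω : ℝ} (hω : 0 < ω) : ∫ s, exp (-(ω * |s|)) = 2 / ω := by
  rw [integral_comp_abs (f := fun s => exp (-(ω * s)))]
  simp_rw [← neg_mul]
  rw [integral_exp_mul_Ioi (neg_lt_zero.mpr hω)]
  field_simp
  simp

lemma integrable_exp_neg_mul_abs {ω : ℝ} (hω : 0 < ω) : Integrable fun s => exp (-(ω * |s|)) := by
  by_contra h
  have := integral_exp_neg_mul_abs hω
  rw [integral_undef h] at this
  exact (div_pos two_pos hω).ne this

lemma norm_setIntegral_le_of_norm_le_exp {E : Type*} [NormedAddCommGroup E] [NormedSpace ℝ E]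
    {ω C t : ℝ} (hω : 0 < ω) (hC : 0 ≤ C) {S : Set ℝ} (hS : MeasurableSet S) {h : ℝ → E}
    (hh : ∀ s ∈ S, ‖h s‖ ≤ C * exp (-(ω * |s - t|))) :
    ‖∫ s in S, h s‖ ≤ 2 * C / ω := by
  have hint : Integrable fun s => C * exp (-(ω * |s - t|)) :=
    ((integrable_exp_neg_mul_abs hω).comp_sub_right t).const_mul C
  calc ‖∫ s in S, h s‖ ≤ ∫ s in S, C * exp (-(ω * |s - t|)) :=
        norm_integral_le_of_norm_le hint.integrableOn (ae_restrict_of_forall_mem hS hh)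
    _ ≤ ∫ s, C * exp (-(ω * |s - t|)) :=
        setIntegral_le_integral hint (ae_of_all _ fun s => by positivity)
    _ = 2 * C / ω := by
        rw [MeasureTheory.integral_const_mul,
          integral_sub_right_eq_self (fun s => exp (-(ω * |s|))), integral_exp_neg_mul_abs hω]
        ring

lemma abs_le_of_dichotomy {p : ℝ → ℝ → ℝ} {k ω : ℝ}
    (h : ∀ t s, (0 ≤ s → s ≤ t → |p t s| < k * exp (-(ω * (t - s)))) ∧
      (t ≤ s → s ≤ 0 → |p t s| < k * exp (ω * (t - s))))
    {t s : ℝ} (hs : s ∈ uIcc 0 t) : |p t s| ≤ k * exp (-(ω * |t - s|)) := by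
  rcases le_total 0 t with ht | ht
  · rw [uIcc_of_le ht] at hs
    rw [abs_of_nonneg (sub_nonneg.mpr hs.2)]
    exact ((h t s).1 hs.1 hs.2).le
  · rw [uIcc_of_ge ht] at hs
    rw [abs_of_nonpos (sub_nonpos.mpr hs.1), neg_sub, ← mul_neg, neg_sub]
    exact ((h t s).2 hs.1 hs.2).le

theorem hasDerivAt_integral_Iio {E : Type*} [NormedAddCommGroup E] [NormedSpace ℝ E]
    [CompleteSpace E] {φ : ℝ → E} (hφ : Integrable φ) (hφc : Continuous φ) (t : ℝ) :
    HasDerivAt (fun u => ∫ s in Iio u, φ s) (φ t) t := by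
  have hsplit : (fun u => ∫ s in Iio u, φ s) = fun u => (∫ s in Iic 0, φ s) + ∫ s in 0..u, φ s := by
    funext u
    rw [setIntegral_congr_set Iio_ae_eq_Iic, ← integral_Iic_sub_Iic hφ.integrableOn hφ.integrableOn]
    abel
  rw [hsplit]
  exact (hφc.integral_hasStrictDerivAt 0 t).hasDerivAt.const_add _

theorem hasDerivAt_deriv_of_forall_hasDerivAt {E : Type*} [NormedAddCommGroup E] [NormedSpace ℝ E]
    {f : E → E} {γ : ℝ → E} (hγ : ∀ t, HasDerivAt γ (f (γ t)) t) {t : ℝ}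
    (hf : DifferentiableAt ℝ f (γ t)) :
    HasDerivAt (deriv γ) (fderiv ℝ f (γ t) (deriv γ t)) t := by
  have hγd : deriv γ = f ∘ γ := funext fun s => (hγ s).deriv
  rw [hγd]
  exact hf.hasFDerivAt.comp_hasDerivAt t (hγ t)

noncomputable def variationOfConstants (u v F : ℝ → Fin 2 → ℝ) (x₂ t : ℝ) : Fin 2 → ℝ :=
  (x₂ - ∫ s in 0..t, wedge (v s) (F s) / wedge (u s) (v s)) • u t +
    (∫ s in Iio t, wedge (u s) (F s) / wedge (u s) (v s)) • v t

section VariationOfConstants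

variable {u v F : ℝ → Fin 2 → ℝ}

theorem hasDerivAt_variationOfConstants {A : ℝ → (Fin 2 → ℝ) →L[ℝ] (Fin 2 → ℝ)}
    (hu : ∀ t, HasDerivAt u (A t (u t)) t) (hv : ∀ t, HasDerivAt v (A t (v t)) t)
    (hΔ : ∀ t, wedge (u t) (v t) ≠ 0) (hF : Continuous F)
    (hint : Integrable fun s => wedge (u s) (F s) / wedge (u s) (v s)) (x₂ t : ℝ) :
    HasDerivAt (variationOfConstants u v F x₂)
      (A t (variationOfConstants u v F x₂ t) + F t) t := by
  have huc : Continuous u := continuous_iff_continuousAt.2 fun t => (hu t).continuousAt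
  have hvc : Continuous v := continuous_iff_continuousAt.2 fun t => (hv t).continuousAt
  have hψ : Continuous fun s => wedge (v s) (F s) / wedge (u s) (v s) :=
    (hvc.wedge hF).div (huc.wedge hvc) hΔ
  have hφ : Continuous fun s => wedge (u s) (F s) / wedge (u s) (v s) :=
    (huc.wedge hF).div (huc.wedge hvc) hΔ
  have hG := ((hψ.integral_hasStrictDerivAt 0 t).hasDerivAt.const_sub x₂).smul (hu t)
  have hH := (hasDerivAt_integral_Iio hint hφ t).smul (hv t)
  refine (hG.add hH).congr_deriv ?_
  rw [variationOfConstants, map_add, map_smul, map_smul]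
  conv_rhs => rw [← wedge_smul_add_smul_eq (hΔ t) (F t)]
  abel

variable {k ω m M : ℝ}

theorem integrable_wedge_div_of_dichotomy (hω : 0 < ω) (hm : 0 < m) (hM : 0 ≤ M)
    (hu : Continuous u) (hv : Continuous v) (hF : Continuous F)
    (hdich : ∀ t s, s ∈ uIcc 0 t → ‖u t‖ * ‖v s‖ ≤ k * exp (-(ω * |t - s|)))
    (hΔ : ∀ t, m ≤ |wedge (u t) (v t)|) (hFM : ∀ t, ‖F t‖ ≤ M) :
    Integrable fun s => wedge (u s) (F s) / wedge (u s) (v s) := by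
  have hΔ0 : ∀ t, wedge (u t) (v t) ≠ 0 := fun t => abs_pos.mp (hm.trans_le (hΔ t))
  have hv0 : v 0 ≠ 0 := fun h => hΔ0 0 (by simp [wedge, h])
  rw [← integrable_smul_const hv0]
  refine Integrable.mono' ((integrable_exp_neg_mul_abs hω).const_mul (2 * M / m * k))
    (((hu.wedge hF).div (hu.wedge hv) hΔ0).smul continuous_const).aestronglyMeasurable
    (ae_of_all _ fun s => ?_)
  have h := norm_wedge_div_smul_le hm (hΔ s) hM (hFM s) (hdich s 0 left_mem_uIcc)
  rwa [sub_zero, ← mul_assoc] at h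

theorem norm_le_of_dichotomy (hω : 0 < ω)
    (hdich : ∀ t s, s ∈ uIcc 0 t → ‖u t‖ * ‖v s‖ ≤ k * exp (-(ω * |t - s|)))
    (hv0 : v 0 ≠ 0) (t : ℝ) : ‖u t‖ ≤ k / ‖v 0‖ := by
  rw [le_div_iff₀ (norm_pos_iff.2 hv0)]
  have hk : 0 ≤ k := by
    simpa using (mul_nonneg (norm_nonneg _) (norm_nonneg _)).trans (hdich 0 0 left_mem_uIcc)
  calc ‖u t‖ * ‖v 0‖ ≤ k * exp (-(ω * |t - 0|)) := hdich t 0 left_mem_uIcc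
    _ ≤ k * 1 := by gcongr; exact exp_le_one_iff.2 (neg_nonpos.2 (by positivity))
    _ = k := mul_one k

theorem norm_intervalIntegral_smul_le_of_dichotomy (hω : 0 < ω) (hm : 0 < m) (hk : 0 ≤ k)
    (hM : 0 ≤ M) (hdich : ∀ t s, s ∈ uIcc 0 t → ‖u t‖ * ‖v s‖ ≤ k * exp (-(ω * |t - s|)))
    (hΔ : ∀ t, m ≤ |wedge (u t) (v t)|) (hFM : ∀ t, ‖F t‖ ≤ M) (t : ℝ) :
    ‖(∫ s in 0..t, wedge (v s) (F s) / wedge (u s) (v s)) • u t‖ ≤ 2 * (2 * M / m * k) / ω := by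
  rw [← intervalIntegral.integral_smul_const, norm_integral_eq_norm_integral_uIoc]
  refine norm_setIntegral_le_of_norm_le_exp (t := t) hω (by positivity) measurableSet_uIoc
    fun s hs => ?_
  rw [mul_assoc, abs_sub_comm]
  exact norm_wedge_div_smul_le hm (hΔ s) hM (hFM s)
    ((mul_comm _ _).trans_le (hdich t s (uIoc_subset_uIcc hs)))

theorem norm_integral_Iio_smul_le_of_dichotomy (hω : 0 < ω) (hm : 0 < m) (hk : 0 ≤ k)
    (hM : 0 ≤ M) (hdich : ∀ t s, s ∈ uIcc 0 t → ‖u t‖ * ‖v s‖ ≤ k * exp (-(ω * |t - s|)))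
    (hΔ : ∀ t, m ≤ |wedge (u t) (v t)|) (hFM : ∀ t, ‖F t‖ ≤ M)
    (hint : Integrable fun s => wedge (u s) (F s) / wedge (u s) (v s))
    (hcrit : ∫ s, wedge (u s) (F s) / wedge (u s) (v s) = 0) (t : ℝ) :
    ‖(∫ s in Iio t, wedge (u s) (F s) / wedge (u s) (v s)) • v t‖ ≤ 2 * (2 * M / m * k) / ω := by
  have hbound : ∀ s, t ∈ uIcc 0 s → ‖(wedge (u s) (F s) / wedge (u s) (v s)) • v t‖ ≤
      2 * M / m * k * exp (-(ω * |s - t|)) := fun s ht => by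
    rw [mul_assoc]
    exact norm_wedge_div_smul_le hm (hΔ s) hM (hFM s) (hdich s t ht)
  rcases le_total t 0 with ht | ht
  · rw [← _root_.integral_smul_const]
    refine norm_setIntegral_le_of_norm_le_exp hω (by positivity) measurableSet_Iio
      fun s hs => hbound s ?_
    rw [uIcc_of_ge ((le_of_lt hs).trans ht)]
    exact ⟨le_of_lt hs, ht⟩
  · have hsplit := integral_Iio_add_Ici hint.integrableOn hint.integrableOn (b := t)
    rw [hcrit, add_eq_zero_iff_eq_neg] at hsplit
    rw [hsplit, neg_smul, norm_neg, ← _root_.integral_smul_const]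
    refine norm_setIntegral_le_of_norm_le_exp hω (by positivity) measurableSet_Ici
      fun s hs => hbound s ?_
    rw [uIcc_of_le (ht.trans hs)]
    exact ⟨ht, hs⟩

theorem exists_norm_variationOfConstants_le (hω : 0 < ω) (hm : 0 < m) (hk : 0 ≤ k)
    (hM : 0 ≤ M) (hdich : ∀ t s, s ∈ uIcc 0 t → ‖u t‖ * ‖v s‖ ≤ k * exp (-(ω * |t - s|)))
    (hΔ : ∀ t, m ≤ |wedge (u t) (v t)|) (hFM : ∀ t, ‖F t‖ ≤ M)
    (hint : Integrable fun s => wedge (u s) (F s) / wedge (u s) (v s))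
    (hcrit : ∫ s, wedge (u s) (F s) / wedge (u s) (v s) = 0) (x₂ : ℝ) :
    ∃ C, ∀ t, ‖variationOfConstants u v F x₂ t‖ ≤ C := by
  have hv0 : v 0 ≠ 0 := fun h => abs_pos.mp (hm.trans_le (hΔ 0)) (by simp [wedge, h])
  refine ⟨|x₂| * (k / ‖v 0‖) + 2 * (2 * M / m * k) / ω + 2 * (2 * M / m * k) / ω,
    fun t => ?_⟩
  rw [variationOfConstants, sub_smul]
  refine (norm_add_le _ _).trans (add_le_add ((norm_sub_le _ _).trans (add_le_add ?_ ?_)) ?_)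
  · rw [norm_smul, Real.norm_eq_abs]
    exact mul_le_mul_of_nonneg_left (norm_le_of_dichotomy hω hdich hv0 t) (abs_nonneg _)
  · exact norm_intervalIntegral_smul_le_of_dichotomy hω hm hk hM hdich hΔ hFM t
  · exact norm_integral_Iio_smul_le_of_dichotomy hω hm hk hM hdich hΔ hFM hint hcrit t

end VariationOfConstants

/-- Under the bounded-solution criterion (`∫_ℝ (1/Δ) f(γ) ∧ F = 0` and the
dichotomy estimates), the explicit variation-of-constants formula
`z_j(t) = γ_j'(t)(x₂ − ∫₀ᵗ (ζ/Δ) ∧ F) + ζ_j(t)·∫_{−∞}^t (γ'/Δ) ∧ F`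
defines a bounded solution of `ż − Df(γ(t))z = F(t)`. -/
theorem explicit_bounded_solution
    (f : (Fin 2 → ℝ) → (Fin 2 → ℝ)) (hf : ContDiff ℝ 2 f)
    (ω : ℝ) (hω : ω > 0)
    (γ : ℝ → Fin 2 → ℝ) (hγ : ∀ t, HasDerivAt γ (f (γ t)) t)
    (ζ : ℝ → Fin 2 → ℝ)
    (hζ : ∀ t, HasDerivAt ζ (fderiv ℝ f (γ t) (ζ t)) t)
    (Δ : ℝ → ℝ)
    (hΔdef : ∀ t, Δ t = deriv γ t 0 * ζ t 1 - deriv γ t 1 * ζ t 0)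
    (hΔ : ∃ m > 0, ∀ t, m ≤ |Δ t|)
    (hdich : ∃ k > 0, ∀ (i j : Fin 2) (t s : ℝ),
      (0 ≤ s → s ≤ t → |deriv γ t i * ζ s j| < k * Real.exp (-(ω * (t - s)))) ∧
      (t ≤ s → s ≤ 0 → |deriv γ t i * ζ s j| < k * Real.exp (ω * (t - s))))
    (F : ℝ → Fin 2 → ℝ) (hFc : Continuous F) (hFb : ∃ M, ∀ t, ‖F t‖ ≤ M)
    (hcrit : ∫ s, (1 / Δ s) * (f (γ s) 0 * F s 1 - f (γ s) 1 * F s 0) = 0)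
    (x₂ : ℝ)
    (z : ℝ → Fin 2 → ℝ)
    (hz : ∀ t j, z t j =
      deriv γ t j *
        (x₂ - ∫ s in (0 : ℝ)..t, (ζ s 0 * F s 1 - ζ s 1 * F s 0) / Δ s) +
      ζ t j *
        ∫ s in Set.Iio t, (deriv γ s 0 * F s 1 - deriv γ s 1 * F s 0) / Δ s) :
    (∀ t, HasDerivAt z (fderiv ℝ f (γ t) (z t) + F t) t) ∧
    ∃ M, ∀ t, ‖z t‖ ≤ M := by
  obtain ⟨m, hm, hmΔ⟩ := hΔ
  obtain ⟨k, hk, hdich⟩ := hdich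
  obtain ⟨M, hFM⟩ := hFb
  have hΔw : ∀ t, Δ t = wedge (deriv γ t) (ζ t) := hΔdef
  have hΔm : ∀ t, m ≤ |wedge (deriv γ t) (ζ t)| := fun t => hΔw t ▸ hmΔ t
  have hu : ∀ t, HasDerivAt (deriv γ) (fderiv ℝ f (γ t) (deriv γ t)) t := fun t =>
    hasDerivAt_deriv_of_forall_hasDerivAt hγ (hf.differentiable (by norm_num) _)
  have huc : Continuous (deriv γ) := continuous_iff_continuousAt.2 fun t => (hu t).continuousAt
  have hζc : Continuous ζ := continuous_iff_continuousAt.2 fun t => (hζ t).continuousAt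
  have hprod : ∀ t s, s ∈ uIcc 0 t → ‖deriv γ t‖ * ‖ζ s‖ ≤ k * exp (-(ω * |t - s|)) :=
    fun t s hs => norm_mul_norm_le_of_forall_abs_mul_le (by positivity)
      fun i j => abs_le_of_dichotomy (hdich i j) hs
  have hM : 0 ≤ M := (norm_nonneg _).trans (hFM 0)
  have hint := integrable_wedge_div_of_dichotomy hω hm hM huc hζc hFc hprod hΔm hFM
  have hcrit_wedge : ∫ s, wedge (deriv γ s) (F s) / wedge (deriv γ s) (ζ s) = 0 := by
    rw [← hcrit]
    congr 1
    funext s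
    rw [← hΔw, (hγ s).deriv, wedge]
    ring
  have hzv : z = variationOfConstants (deriv γ) ζ F x₂ := by
    funext t j
    simp only [hz, hΔdef, variationOfConstants, wedge, Pi.add_apply, Pi.smul_apply, smul_eq_mul]
    ring
  rw [hzv]
  exact ⟨hasDerivAt_variationOfConstants hu hζ (fun t => abs_pos.mp (hm.trans_le (hΔm t))) hFc
    hint x₂, exists_norm_variationOfConstants_le hω hm hk.le hM hprod hΔm hFM hint
      hcrit_wedge x₂⟩
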